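/- Let Q_n denote the product of the first n primes and let φ denote Euler's totient function. For a real x ≥ 2 and positive integer M, let π(x, M) denote the number of primes p ≤ x with p ≡ 1 (mod M). Suppose there exists a constant A > 0 such that for all n ≥ 1 and all real x ≥ 2, |π(x, Q_n) − (1/φ(Q_n))·∫₂^x dt/ln t| ≤ A·√x·(ln x + ln Q_n). Then there exist constants C' ≥ C ≥ 1 such that for every n ≥ 1, the set {1 + k·Q_n : k ∈ {1,…,2^{n^C}}} contains at least 2^{n^C}/n^{C'} primes. -/

import Mathlib

lemma nth_prime_le (i : ℕ) : Nat.nth Nat.Prime i ≤ 2 ^ (i + 1) := by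
  induction i with
  | zero => simp [Nat.nth_prime_zero_eq_two]
  | succ i ih =>
    obtain ⟨q, hq, hq1, hq2⟩ := Nat.exists_prime_lt_and_le_two_mul (Nat.nth Nat.Prime i)
      (Nat.Prime.pos (Nat.prime_nth_prime i)).ne'
    have hqe : Nat.nth Nat.Prime (Nat.count Nat.Prime q) = q := Nat.nth_count hq
    have hlt : i < Nat.count Nat.Prime q := by
      by_contra hc
      push_neg at hc
      have h2 := (Nat.nth_le_nth Nat.infinite_setOf_prime).2 hc
      rw [hqe] at h2
      exact absurd hq1 (not_lt.2 h2)
    have h3 : Nat.nth Nat.Prime (i+1) ≤ Nat.nth Nat.Prime (Nat.count Nat.Prime q) :=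
      (Nat.nth_le_nth Nat.infinite_setOf_prime).2 hlt
    rw [hqe] at h3
    calc Nat.nth Nat.Prime (i+1) ≤ q := h3
      _ ≤ 2 * Nat.nth Nat.Prime i := hq2
      _ ≤ 2 * 2 ^ (i+1) := by omega
      _ = 2 ^ (i+2) := by ring

/-- The product of the first `n` primes (`Q_n` in the paper). -/
noncomputable def primProd (n : ℕ) : ℕ := ∏ i ∈ Finset.range n, Nat.nth Nat.Prime i

lemma primProd_pos (n : ℕ) : 0 < primProd n :=
  Finset.prod_pos fun i _ => (Nat.prime_nth_prime i).pos

lemma two_le_primProd (n : ℕ) (hn : 1 ≤ n) : 2 ≤ primProd n := by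
  have hd : Nat.nth Nat.Prime 0 ∣ primProd n :=
    Finset.dvd_prod_of_mem _ (Finset.mem_range.2 hn)
  rw [Nat.nth_prime_zero_eq_two] at hd
  exact Nat.le_of_dvd (primProd_pos n) hd

lemma sum_range_add_one_le (n : ℕ) : ∑ i ∈ Finset.range n, (i + 1) ≤ n ^ 2 := by
  induction n with
  | zero => simp
  | succ m ih =>
    rw [Finset.sum_range_succ]
    nlinarith

lemma primProd_le (n : ℕ) : primProd n ≤ 2 ^ (n ^ 2) := by
  have h1 : primProd n ≤ ∏ i ∈ Finset.range n, 2 ^ (i + 1) :=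
    Finset.prod_le_prod' fun i _ => nth_prime_le i
  have h2 : ∏ i ∈ Finset.range n, 2 ^ (i + 1) = 2 ^ (∑ i ∈ Finset.range n, (i + 1)) :=
    Finset.prod_pow_eq_pow_sum _ _ _
  have h3 := sum_range_add_one_le n
  calc primProd n ≤ 2 ^ (∑ i ∈ Finset.range n, (i + 1)) := h2 ▸ h1
    _ ≤ 2 ^ (n ^ 2) := Nat.pow_le_pow_right (by norm_num) h3

lemma li_lower {x : ℝ} (hx : 2 ≤ x) :
    (x - 2) / Real.log x ≤ ∫ t in (2:ℝ)..x, 1 / Real.log t := by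
  have hlogx : 0 < Real.log x := Real.log_pos (by linarith)
  have hcont : ContinuousOn (fun t : ℝ => 1 / Real.log t) (Set.Icc 2 x) := by
    apply ContinuousOn.div continuousOn_const
    · exact Real.continuousOn_log.mono (fun t ht => by
        simp only [Set.mem_compl_iff, Set.mem_singleton_iff]
        have := ht.1; intro h0; simp [h0] at this; linarith)
    · intro t ht
      exact ne_of_gt (Real.log_pos (by linarith [ht.1]))
  have hint : IntervalIntegrable (fun t : ℝ => 1 / Real.log t) MeasureTheory.volume 2 x :=
    hcont.intervalIntegrable_of_Icc hx
  have hmono := intervalIntegral.integral_mono_on (μ := MeasureTheory.volume)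
    (f := fun _ : ℝ => 1 / Real.log x) (g := fun t : ℝ => 1 / Real.log t) hx
    intervalIntegrable_const hint
    (fun t ht => by
      apply one_div_le_one_div_of_le (Real.log_pos (by linarith [ht.1]))
      exact Real.log_le_log (by linarith [ht.1]) ht.2)
  rw [intervalIntegral.integral_const] at hmono
  calc (x - 2) / Real.log x = (x - 2) • (1 / Real.log x) := by
        rw [smul_eq_mul]; ring
    _ ≤ _ := hmono

/-- `π(x, M)`: the number of primes `p ≤ x` with `p ≡ 1 (mod M)`. -/
noncomputable def piProg (x : ℝ) (M : ℕ) : ℕ :=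
  Set.ncard {q : ℕ | q.Prime ∧ (q : ℝ) ≤ x ∧ q % M = 1}

lemma piProg_le_card (n : ℕ) (hn : 1 ≤ n) (K : ℝ) :
    (piProg (K * primProd n) (primProd n) : ℝ) ≤
      (((Finset.Icc 1 (Nat.floor K)).filter
          (fun k => Nat.Prime (1 + k * primProd n))).card : ℝ) := by
  set Q := primProd n with hQ
  have hQ2 : 2 ≤ Q := two_le_primProd n hn
  set F := (Finset.Icc 1 (Nat.floor K)).filter (fun k => Nat.Prime (1 + k * Q)) with hF
  have hsub : {q : ℕ | q.Prime ∧ (q : ℝ) ≤ K * Q ∧ q % Q = 1} ⊆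
      ↑(F.image (fun k => 1 + k * Q)) := by
    rintro q ⟨hq, hqx, hqm⟩
    simp only [Finset.coe_image, Set.mem_image, Finset.mem_coe, hF, Finset.mem_filter,
      Finset.mem_Icc]
    refine ⟨q / Q, ⟨⟨?_, ?_⟩, ?_⟩, ?_⟩
    · -- 1 ≤ q / Q
      rcases Nat.eq_zero_or_pos (q / Q) with h0 | h1
      · exfalso
        have h := Nat.div_add_mod q Q
        rw [h0, hqm, Nat.mul_zero, Nat.zero_add] at h
        exact Nat.Prime.one_lt hq |>.ne h
      · exact h1
    · -- q / Q ≤ ⌊K⌋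
      apply Nat.le_floor
      have hq1 : (q / Q) * Q ≤ q := Nat.div_mul_le_self q Q
      have : ((q / Q : ℕ) : ℝ) * Q ≤ q := by exact_mod_cast hq1
      have hQpos : (0:ℝ) < Q := by positivity
      have h2 : ((q / Q : ℕ) : ℝ) * Q ≤ K * Q := le_trans this hqx
      exact le_of_mul_le_mul_right h2 hQpos
    · -- prime
      have h := Nat.div_add_mod q Q
      rw [hqm, Nat.mul_comm] at h
      have hq' : 1 + q / Q * Q = q := by omega
      rw [hq']; exact hq
    · have h := Nat.div_add_mod q Q
      rw [hqm, Nat.mul_comm] at h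
      omega
  have h1 : piProg (K * Q) Q ≤ (F.image (fun k => 1 + k * Q)).card := by
    rw [piProg, ← Set.ncard_coe_finset]
    exact Set.ncard_le_ncard hsub (F.image _).finite_toSet
  have h2 : (F.image (fun k => 1 + k * Q)).card ≤ F.card := Finset.card_image_le
  exact_mod_cast le_trans h1 h2

set_option maxHeartbeats 3000000 in
/-- A GRH-type deviation bound for primes `≡ 1 (mod Q_n)` implies the paper's
hypothesis FPH: there are constants `C' ≥ C ≥ 1` such that for every `n ≥ 1`
the set `{1 + k·Q_n : 1 ≤ k ≤ 2^{n^C}}` contains at least `2^{n^C}/n^{C'}`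
primes. -/
theorem stmt17
    (h : ∃ A : ℝ, 0 < A ∧ ∀ n : ℕ, 1 ≤ n → ∀ x : ℝ, 2 ≤ x →
      |(piProg x (primProd n) : ℝ) -
          (1 / (Nat.totient (primProd n) : ℝ)) * ∫ t in (2:ℝ)..x, 1 / Real.log t|
        ≤ A * Real.sqrt x * (Real.log x + Real.log (primProd n))) :
    ∃ C C' : ℝ, 1 ≤ C ∧ C ≤ C' ∧ ∀ n : ℕ, 1 ≤ n →
      (2 : ℝ) ^ ((n : ℝ) ^ C) / (n : ℝ) ^ C' ≤
        (((Finset.Icc 1 (Nat.floor ((2 : ℝ) ^ ((n : ℝ) ^ C)))).filter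
            (fun k => Nat.Prime (1 + k * primProd n))).card : ℝ) := by
  obtain ⟨A, hA, hbound⟩ := h
  have hl2a : (1/2 : ℝ) ≤ Real.log 2 := by
    have := Real.log_two_gt_d9; linarith
  have hl2b : Real.log 2 ≤ 1 := by
    have := Real.log_two_lt_d9; linarith
  set C : ℝ := max 688 (32 * (|Real.log (24 * A)| + 1)) with hCdef
  have hC688 : (688 : ℝ) ≤ C := le_max_left _ _
  have hCA : 32 * (|Real.log (24 * A)| + 1) ≤ C := le_max_right _ _
  have hC1 : (1:ℝ) ≤ C := by linarith
  clear_value C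
  refine ⟨C, C + 3, hC1, by linarith, ?_⟩
  intro n hn
  rcases eq_or_lt_of_le hn with h1 | h2
  · -- n = 1
    have hn1 : n = 1 := h1.symm
    subst hn1
    have e1 : ((1:ℕ):ℝ) = (1:ℝ) := by norm_num
    rw [e1, Real.one_rpow, Real.one_rpow, Real.rpow_one]
    have e2 : Nat.floor (2:ℝ) = 2 := by norm_num
    rw [e2]
    have e3 : primProd 1 = 2 := by
      simp [primProd, Nat.nth_prime_zero_eq_two]
    rw [e3]
    have e4 : ((Finset.Icc 1 2).filter (fun k => Nat.Prime (1 + k * 2))).card = 2 := by decide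
    rw [e4]
    norm_num
  · -- 2 ≤ n
    have hn2 : 2 ≤ n := h2
    set u : ℝ := (n : ℝ) with hu
    have hu2 : (2:ℝ) ≤ u := by
      rw [hu]; exact_mod_cast hn2
    have hu0 : (0:ℝ) < u := by linarith
    set y : ℝ := u ^ C with hy
    have hy0 : 0 < y := Real.rpow_pos_of_pos hu0 C
    -- y ≥ 2^C
    have hy2C : (2:ℝ) ^ C ≤ y := Real.rpow_le_rpow (by norm_num) hu2 (by linarith)
    -- 2^C ≥ 2^10 = 1024
    have h2C : (1024:ℝ) ≤ (2:ℝ) ^ C := by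
      have : (2:ℝ) ^ (10:ℝ) ≤ (2:ℝ) ^ C :=
        Real.rpow_le_rpow_of_exponent_le one_le_two (by linarith)
      have h10 : (2:ℝ) ^ (10:ℝ) = 1024 := by
        rw [show (10:ℝ) = ((10:ℕ):ℝ) by norm_num, Real.rpow_natCast]; norm_num
      linarith [h10 ▸ this]
    have hy1024 : (1024:ℝ) ≤ y := by linarith
    -- u^2 ≤ y / 4
    have hu2y : u ^ 2 ≤ y / 4 := by
      have e : y = u ^ (2:ℝ) * u ^ (C - 2) := by
        rw [← Real.rpow_add hu0]; ring_nf; exact hy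
      have e2 : u ^ (2:ℝ) = u ^ (2:ℕ) := by
        rw [← Real.rpow_natCast u 2]; norm_num
      have h4 : (4:ℝ) ≤ u ^ (C - 2) := by
        have : (2:ℝ) ^ (C - 2) ≤ u ^ (C - 2) :=
          Real.rpow_le_rpow (by norm_num) hu2 (by linarith)
        have h22 : (4:ℝ) ≤ (2:ℝ) ^ (C - 2) := by
          have := Real.rpow_le_rpow_of_exponent_le (one_le_two) (show (2:ℝ) ≤ C - 2 by linarith)
          have e22 : (2:ℝ) ^ (2:ℝ) = 4 := by
            rw [show (2:ℝ) = ((2:ℕ):ℝ) by norm_num, Real.rpow_natCast]; norm_num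
          linarith [e22 ▸ this]
        linarith
      have hup : 0 < u ^ (2:ℕ) := by positivity
      calc u ^ 2 = u ^ (2:ℕ) := by norm_num
        _ ≤ u ^ (2:ℕ) * (u ^ (C-2) / 4) :=
              le_mul_of_one_le_right hup.le (by linarith)
        _ = (u ^ (2:ℝ) * u ^ (C-2)) / 4 := by rw [e2]; ring
        _ = y / 4 := by rw [← e]
    -- basic quantities
    have hQ2 : 2 ≤ primProd n := two_le_primProd n hn
    have hQr2 : (2:ℝ) ≤ (primProd n : ℝ) := by exact_mod_cast hQ2
    set Qr : ℝ := (primProd n : ℝ) with hQrdef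
    have hQr0 : (0:ℝ) < Qr := by linarith
    have hQrle : Qr ≤ (2:ℝ) ^ (u ^ 2) := by
      have h1 : (primProd n : ℝ) ≤ ((2 ^ (n ^ 2) : ℕ) : ℝ) := by exact_mod_cast primProd_le n
      have h2 : ((2 ^ (n ^ 2) : ℕ) : ℝ) = (2:ℝ) ^ (u ^ 2) := by
        push_cast
        rw [← Real.rpow_natCast 2 (n ^ 2)]
        push_cast [hu]
        norm_num
      rw [hQrdef, ← h2]; exact h1
    have hT1 : (1:ℝ) ≤ (Nat.totient (primProd n) : ℝ) := by
      exact_mod_cast Nat.totient_pos.mpr (primProd_pos n)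
    have hTQ : (Nat.totient (primProd n) : ℝ) ≤ Qr := by
      rw [hQrdef]; exact_mod_cast Nat.totient_le (primProd n)
    set K : ℝ := (2:ℝ) ^ y with hKdef
    have hK0 : (0:ℝ) < K := Real.rpow_pos_of_pos two_pos y
    have hK4 : (4:ℝ) ≤ K := by
      have h1 : (2:ℝ) ^ (2:ℝ) ≤ (2:ℝ) ^ y :=
        Real.rpow_le_rpow_of_exponent_le one_le_two (by linarith)
      have e22 : (2:ℝ) ^ (2:ℝ) = 4 := by
        rw [show (2:ℝ) = ((2:ℕ):ℝ) by norm_num, Real.rpow_natCast]; norm_num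
      rw [hKdef]; linarith [e22 ▸ h1]
    set X : ℝ := K * Qr with hXdef
    clear_value u y Qr K X
    have hX4 : (4:ℝ) ≤ X := by
      have h8 : (4:ℝ) * 2 ≤ K * Qr := mul_le_mul hK4 hQr2 (by norm_num) hK0.le
      rw [hXdef]; linarith
    have hX2 : (2:ℝ) ≤ X := by linarith
    -- logarithm bounds
    have hlogQ0 : 0 < Real.log Qr := Real.log_pos (by linarith)
    have hlogQle : Real.log Qr ≤ u ^ 2 := by
      have h1 := Real.log_le_log hQr0 hQrle
      rw [Real.log_rpow two_pos] at h1
      have h2 : u ^ 2 * Real.log 2 ≤ u ^ 2 := mul_le_of_le_one_right (sq_nonneg u) hl2b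
      linarith
    have hlogX : Real.log X = y * Real.log 2 + Real.log Qr := by
      rw [hXdef, Real.log_mul (ne_of_gt hK0) (ne_of_gt hQr0), hKdef, Real.log_rpow two_pos]
    have hylog2 : 0 < y * Real.log 2 := mul_pos hy0 (Real.log_pos one_lt_two)
    have hylog2' : y * Real.log 2 ≤ y := mul_le_of_le_one_right hy0.le hl2b
    have hlogX0 : 0 < Real.log X := by rw [hlogX]; linarith
    have hlogXle : Real.log X ≤ 2 * y := by rw [hlogX]; linarith [hu2y, hlogQle]
    have hsum : Real.log X + Real.log Qr ≤ 3 * y := by rw [hlogX]; linarith [hu2y, hlogQle]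
    -- main term lower bound
    have hLi := li_lower hX2
    have hLi0 : (0:ℝ) ≤ (X - 2) / Real.log X := div_nonneg (by linarith) hlogX0.le
    have hmain : K / (4 * y) ≤
        (1 / (Nat.totient (primProd n) : ℝ)) * ∫ t in (2:ℝ)..X, 1 / Real.log t := by
      have step1 : X / 2 / (2 * y) ≤ (X - 2) / Real.log X :=
        div_le_div₀ (by linarith) (by linarith) hlogX0 hlogXle
      have step2 : 1 / Qr * (X / 2 / (2 * y)) = K / (4 * y) := by
        rw [hXdef]
        field_simp [ne_of_gt hQr0, ne_of_gt hy0]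
        ring_nf
        try exact Or.inl trivial
      have t1 : (1:ℝ) / Qr ≤ 1 / (Nat.totient (primProd n) : ℝ) :=
        one_div_le_one_div_of_le (by linarith) hTQ
      have t2 : 1 / Qr * (X / 2 / (2 * y)) ≤
          (1 / (Nat.totient (primProd n) : ℝ)) * ∫ t in (2:ℝ)..X, 1 / Real.log t := by
        apply mul_le_mul t1 (le_trans step1 hLi) ?_ (by positivity)
        positivity
      rw [step2] at t2
      exact t2
    -- sqrt bound
    have hsqK : Real.sqrt K = (2:ℝ) ^ (y / 2) := by
      rw [hKdef, Real.sqrt_eq_rpow, ← Real.rpow_mul (by norm_num)]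
      ring_nf
    have hsqQ : Real.sqrt Qr ≤ (2:ℝ) ^ (u ^ 2 / 2) := by
      have h1 := Real.sqrt_le_sqrt hQrle
      have h2 : Real.sqrt ((2:ℝ) ^ (u ^ 2)) = (2:ℝ) ^ (u ^ 2 / 2) := by
        rw [Real.sqrt_eq_rpow, ← Real.rpow_mul (by norm_num)]
        ring_nf
      rw [h2] at h1
      exact h1
    have hsqrtX : Real.sqrt X ≤ (2:ℝ) ^ (y / 2) * (2:ℝ) ^ (u ^ 2 / 2) := by
      rw [hXdef, Real.sqrt_mul hK0.le, hsqK]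
      exact mul_le_mul_of_nonneg_left hsqQ (by positivity)
    -- the two key exponential dominations
    have hP2 : y ≤ (2:ℝ) ^ (y / 8) := by
      have hsy : (32:ℝ) ≤ Real.sqrt y := by
        have h1 : Real.sqrt 1024 ≤ Real.sqrt y := Real.sqrt_le_sqrt hy1024
        have h2 : Real.sqrt 1024 = 32 := by
          rw [show (1024:ℝ) = 32 ^ 2 by norm_num, Real.sqrt_sq (by norm_num)]
        linarith
      have hlogy : Real.log y ≤ 2 * Real.sqrt y := by
        have h1 : Real.log (Real.sqrt y) ≤ Real.sqrt y - 1 :=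
          Real.log_le_sub_one_of_pos (Real.sqrt_pos.mpr hy0)
        rw [Real.log_sqrt hy0.le] at h1
        linarith
      have hyy : Real.sqrt y * Real.sqrt y = y := Real.mul_self_sqrt hy0.le
      have t1 : 32 * Real.sqrt y ≤ y := by
        have := mul_le_mul_of_nonneg_right hsy (Real.sqrt_nonneg y)
        linarith [hyy ▸ this]
      have t2 : y / 8 * (1/2) ≤ y / 8 * Real.log 2 :=
        mul_le_mul_of_nonneg_left hl2a (by positivity)
      have h2 : Real.log y ≤ y / 8 * Real.log 2 := by linarith
      calc y = Real.exp (Real.log y) := (Real.exp_log hy0).symm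
        _ ≤ Real.exp (Real.log 2 * (y / 8)) := Real.exp_le_exp.2 (by linarith)
        _ = (2:ℝ) ^ (y / 8) := (Real.rpow_def_of_pos two_pos _).symm
    have hP1 : 24 * A ≤ (2:ℝ) ^ (y / 8) := by
      have h24 : (0:ℝ) < 24 * A := by positivity
      have h2C' : C * Real.log 2 ≤ (2:ℝ) ^ C := by
        have h1 := Real.add_one_le_exp (Real.log 2 * C)
        rw [Real.rpow_def_of_pos two_pos C, mul_comm C (Real.log 2)]
        linarith
      have hstep : C / 32 ≤ y / 8 * Real.log 2 := by
        have t1 : y / 8 * (1/2) ≤ y / 8 * Real.log 2 :=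
          mul_le_mul_of_nonneg_left hl2a (by positivity)
        have t2 : C * (1/2) ≤ C * Real.log 2 :=
          mul_le_mul_of_nonneg_left hl2a (by linarith)
        linarith
      have habs2 : Real.log (24 * A) ≤ |Real.log (24 * A)| := le_abs_self _
      have hlog24 : Real.log (24 * A) ≤ y / 8 * Real.log 2 := by linarith
      calc 24 * A = Real.exp (Real.log (24 * A)) := (Real.exp_log h24).symm
        _ ≤ Real.exp (Real.log 2 * (y / 8)) := Real.exp_le_exp.2 (by linarith)
        _ = (2:ℝ) ^ (y / 8) := (Real.rpow_def_of_pos two_pos _).symm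
    have hR0 : (0:ℝ) < (2:ℝ) ^ ((y - u ^ 2) / 2) := Real.rpow_pos_of_pos two_pos _
    have hkey : 24 * A * y ^ 2 ≤ (2:ℝ) ^ ((y - u ^ 2) / 2) := by
      have h38 : (2:ℝ) ^ (3 * y / 8) ≤ (2:ℝ) ^ ((y - u ^ 2) / 2) :=
        Real.rpow_le_rpow_of_exponent_le one_le_two (by linarith)
      have e3 : (2:ℝ) ^ (3 * y / 8) = (2:ℝ) ^ (y / 8) * (2:ℝ) ^ (y / 8) * (2:ℝ) ^ (y / 8) := by
        rw [← Real.rpow_add two_pos, ← Real.rpow_add two_pos]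
        ring_nf
      have hp : (0:ℝ) < (2:ℝ) ^ (y / 8) := Real.rpow_pos_of_pos two_pos _
      have h1 : 24 * A * y * y ≤ (2:ℝ) ^ (y / 8) * (2:ℝ) ^ (y / 8) * (2:ℝ) ^ (y / 8) := by
        have m1 : 24 * A * y ≤ (2:ℝ) ^ (y / 8) * (2:ℝ) ^ (y / 8) :=
          mul_le_mul hP1 hP2 hy0.le hp.le
        exact mul_le_mul m1 hP2 hy0.le (by positivity)
      calc 24 * A * y ^ 2 = 24 * A * y * y := by ring
        _ ≤ (2:ℝ) ^ (y / 8) * (2:ℝ) ^ (y / 8) * (2:ℝ) ^ (y / 8) := h1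
        _ = (2:ℝ) ^ (3 * y / 8) := e3.symm
        _ ≤ _ := h38
    -- error bound
    have herr : A * Real.sqrt X * (Real.log X + Real.log Qr) ≤ K / (8 * y) := by
      have hP : (0:ℝ) < (2:ℝ) ^ (y / 2) * (2:ℝ) ^ (u ^ 2 / 2) := by positivity
      have E1 : A * Real.sqrt X * (Real.log X + Real.log Qr) ≤
          A * ((2:ℝ) ^ (y / 2) * (2:ℝ) ^ (u ^ 2 / 2)) * (3 * y) := by
        apply mul_le_mul (mul_le_mul_of_nonneg_left hsqrtX hA.le) hsum ?_ (by positivity)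
        · linarith
      have eK : K = (2:ℝ) ^ (y / 2) * (2:ℝ) ^ (u ^ 2 / 2) * (2:ℝ) ^ ((y - u ^ 2) / 2) := by
        rw [hKdef, ← Real.rpow_add two_pos, ← Real.rpow_add two_pos]
        ring_nf
      have E2 : A * ((2:ℝ) ^ (y / 2) * (2:ℝ) ^ (u ^ 2 / 2)) * (3 * y) ≤ K / (8 * y) := by
        rw [eK, le_div_iff₀ (by positivity)]
        have h1 := mul_le_mul_of_nonneg_left hkey hP.le
        calc A * ((2:ℝ) ^ (y / 2) * (2:ℝ) ^ (u ^ 2 / 2)) * (3 * y) * (8 * y)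
            = ((2:ℝ) ^ (y / 2) * (2:ℝ) ^ (u ^ 2 / 2)) * (24 * A * y ^ 2) := by ring
          _ ≤ ((2:ℝ) ^ (y / 2) * (2:ℝ) ^ (u ^ 2 / 2)) * ((2:ℝ) ^ ((y - u ^ 2) / 2)) := h1
          _ = (2:ℝ) ^ (y / 2) * (2:ℝ) ^ (u ^ 2 / 2) * (2:ℝ) ^ ((y - u ^ 2) / 2) * 1 := by ring
          _ ≤ _ := by linarith [le_refl ((2:ℝ) ^ (y / 2) * (2:ℝ) ^ (u ^ 2 / 2) * (2:ℝ) ^ ((y - u ^ 2) / 2))]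
      linarith
    -- goal-side bound
    have hgoal2 : K / u ^ (C + 3) ≤ K / (8 * y) := by
      have e : u ^ (C + 3) = y * u ^ (3:ℝ) := by
        rw [hy, ← Real.rpow_add hu0]
      have h8 : (8:ℝ) ≤ u ^ (3:ℝ) := by
        have h1 : (2:ℝ) ^ (3:ℝ) ≤ u ^ (3:ℝ) :=
          Real.rpow_le_rpow (by norm_num) hu2 (by norm_num)
        have e23 : (2:ℝ) ^ (3:ℝ) = 8 := by
          rw [show (3:ℝ) = ((3:ℕ):ℝ) by norm_num, Real.rpow_natCast]; norm_num
        linarith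
      apply div_le_div_of_nonneg_left hK0.le (by positivity)
      rw [e]
      calc 8 * y = y * 8 := by ring
        _ ≤ y * u ^ (3:ℝ) := mul_le_mul_of_nonneg_left h8 hy0.le
    -- apply the hypothesis
    have habs := hbound n hn X hX2
    have hpi := (abs_le.mp habs).1
    rw [← hQrdef] at hpi
    have hcount := piProg_le_card n hn K
    have e48 : K / (4 * y) = K / (8 * y) + K / (8 * y) := by
      field_simp
      ring
    have hXcount : (piProg X (primProd n) : ℝ) ≤
        (((Finset.Icc 1 (Nat.floor K)).filter
            (fun k => Nat.Prime (1 + k * primProd n))).card : ℝ) := by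
      rw [hXdef, hQrdef]; exact hcount
    linarith
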